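/- arXiv:2505.15739 — 3 statements merged into one kernel-verified Lean document; each statement's English description precedes it below -/
import Mathlib

section
/- Let n ≥ 1 and let x_1, …, x_{n+1} be affinely independent points of ℝ^n (the vertices of a nondegenerate simplex S) all lying in the closed unit ball B_n = {x : ‖x‖ ≤ 1}. Let c = (1/(n+1))·Σ_{j=1}^{n+1} x_j be the centroid of S. Then for every integer m with 1 ≤ m ≤ n there exists a subset J ⊆ {1, …, n+1} of cardinality m such that, with g_J = (1/m)·Σ_{j∈J} x_j and ρ = √(mn/(n−m+1)), the point y_J = (1+ρ)·c − ρ·g_J satisfies ‖y_J‖ ≤ 1. -/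
/-!
Average over all `m`-element faces. With `u j = x j - c` (so `∑ u j = 0`) and
`v J = ∑ j ∈ J, u j`, the point of the statement is `y J = c - (ρ / m) • v J`. The `v J` sum to zero
and `∑ J, ‖v J‖² = C(n-1, m-1) ∑ j, ‖u j‖²`, so for this `ρ` the mean of `‖y J‖²` is
`‖c‖² + (n+1)⁻¹ ∑ j, ‖u j‖² = (n+1)⁻¹ ∑ j, ‖x j‖² ≤ 1`, and some face has `‖y J‖ ≤ 1`.
-/

open Finset RealInnerProductSpace

namespace Finset

variable {ι M : Type*} [DecidableEq ι] [AddCommMonoid M]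

theorem sum_powersetCard_sum_comm (s : Finset ι) (k : ℕ) (f : Finset ι → ι → M) :
    ∑ J ∈ s.powersetCard k, ∑ j ∈ J, f J j = ∑ j ∈ s, ∑ J ∈ s.powersetCard k with j ∈ J, f J j :=
  sum_comm' fun J j => by
    simp only [mem_filter, mem_powersetCard]
    exact ⟨fun ⟨⟨hJs, hJ⟩, hj⟩ => ⟨⟨⟨hJs, hJ⟩, hj⟩, hJs hj⟩, fun ⟨h, _⟩ => h⟩

theorem filter_notMem_powersetCard (s : Finset ι) (k : ℕ) (j : ι) :
    {J ∈ s.powersetCard k | j ∉ J} = (s.erase j).powersetCard k := by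
  ext J
  simp only [mem_filter, mem_powersetCard, subset_erase]
  tauto

theorem sum_powersetCard_sum (s : Finset ι) (k : ℕ) (g : ι → M) :
    ∑ J ∈ s.powersetCard (k + 1), ∑ j ∈ J, g j = (#s - 1).choose k • ∑ j ∈ s, g j := by
  rw [sum_powersetCard_sum_comm, smul_sum]
  refine sum_congr rfl fun j hj => ?_
  have hcount := card_filter_powersetCard_subset {j} s (k + 1) (singleton_subset_iff.2 hj)
    (by simp)
  simp only [singleton_subset_iff, card_singleton, Nat.add_sub_cancel] at hcount
  rw [sum_const, hcount]

end Finset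

section InnerProductSpace

variable {ι E : Type*} [NormedAddCommGroup E] [InnerProductSpace ℝ E]

theorem sum_norm_add_sq_of_sum_eq_zero (s : Finset ι) (a : E) (w : ι → E)
    (hw : ∑ i ∈ s, w i = 0) :
    ∑ i ∈ s, ‖a + w i‖ ^ 2 = #s * ‖a‖ ^ 2 + ∑ i ∈ s, ‖w i‖ ^ 2 := by
  simp only [norm_add_sq_real, sum_add_distrib, ← mul_sum, ← inner_sum, hw, inner_zero_right,
    sum_const, nsmul_eq_mul]
  ring

variable [DecidableEq ι]

theorem sum_powersetCard_norm_sum_sq_of_sum_eq_zero (s : Finset ι) (u : ι → E)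
    (hu : ∑ j ∈ s, u j = 0) (k : ℕ) :
    ∑ J ∈ s.powersetCard (k + 1), ‖∑ j ∈ J, u j‖ ^ 2 = (#s - 2).choose k * ∑ j ∈ s, ‖u j‖ ^ 2 := by
  have hcontaining : ∀ j ∈ s,
      ∑ J ∈ s.powersetCard (k + 1) with j ∈ J, ∑ l ∈ J, u l = (#s - 2).choose k • u j := by
    intro j hj
    -- all the `∑ l ∈ J, u l` sum to zero; those with `j ∉ J` are counted on `s.erase j`
    have htotal : ∑ J ∈ s.powersetCard (k + 1), ∑ l ∈ J, u l = 0 := by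
      rw [sum_powersetCard_sum, hu, smul_zero]
    have hmissing : ∑ J ∈ s.powersetCard (k + 1) with j ∉ J, ∑ l ∈ J, u l
        = -((#s - 2).choose k • u j) := by
      rw [filter_notMem_powersetCard, sum_powersetCard_sum, card_erase_of_mem hj,
        sum_erase_eq_sub hj, hu, zero_sub, smul_neg, Nat.sub_sub]
    rw [← sum_filter_add_sum_filter_not _ (j ∈ ·), hmissing] at htotal
    exact eq_of_sub_eq_zero (by rwa [sub_eq_add_neg])
  calc ∑ J ∈ s.powersetCard (k + 1), ‖∑ j ∈ J, u j‖ ^ 2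
      = ∑ J ∈ s.powersetCard (k + 1), ∑ j ∈ J, ⟪u j, ∑ l ∈ J, u l⟫ := by
        simp only [← real_inner_self_eq_norm_sq, sum_inner]
    _ = ∑ j ∈ s, ⟪u j, ∑ J ∈ s.powersetCard (k + 1) with j ∈ J, ∑ l ∈ J, u l⟫ := by
        simp only [sum_powersetCard_sum_comm, inner_sum]
    _ = (#s - 2).choose k * ∑ j ∈ s, ‖u j‖ ^ 2 := by
        rw [mul_sum]
        refine sum_congr rfl fun j hj => ?_
        rw [hcontaining j hj, ← Nat.cast_smul_eq_nsmul ℝ, real_inner_smul_right,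
          real_inner_self_eq_norm_sq]

theorem sum_powersetCard_norm_sub_smul_sum_sq (s : Finset ι) (x : ι → E) (c : E)
    (hc : ∑ j ∈ s, (x j - c) = 0) (k : ℕ) (t : ℝ) :
    ∑ J ∈ s.powersetCard (k + 1), ‖c - t • ∑ j ∈ J, (x j - c)‖ ^ 2
      = (#s).choose (k + 1) * ‖c‖ ^ 2 + t ^ 2 * (#s - 2).choose k * ∑ j ∈ s, ‖x j - c‖ ^ 2 := by
  have hmean : ∑ J ∈ s.powersetCard (k + 1), -(t • ∑ j ∈ J, (x j - c)) = 0 := by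
    rw [sum_neg_distrib, ← smul_sum, sum_powersetCard_sum, hc, smul_zero, smul_zero, neg_zero]
  simp only [sub_eq_add_neg c, sum_norm_add_sq_of_sum_eq_zero _ c _ hmean, norm_neg, norm_smul,
    mul_pow, Real.norm_eq_abs, sq_abs, ← mul_sum, card_powersetCard]
  rw [sum_powersetCard_norm_sum_sq_of_sum_eq_zero s _ hc]
  ring

end InnerProductSpace

section Module

variable {ι E : Type*} [AddCommGroup E] [Module ℝ E]

theorem sum_sub_smul_sum_eq_zero (s : Finset ι) (hs : s.Nonempty) (x : ι → E) :
    ∑ j ∈ s, (x j - (#s : ℝ)⁻¹ • ∑ i ∈ s, x i) = 0 := by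
  rw [sum_sub_distrib, sum_const, ← Nat.cast_smul_eq_nsmul ℝ, smul_smul,
    mul_inv_cancel₀ (by exact_mod_cast hs.card_ne_zero), one_smul, sub_self]

theorem one_add_smul_sub_smul_inv_card_smul_sum (J : Finset ι) (hJ : J.Nonempty) (x : ι → E)
    (c : E) (ρ : ℝ) :
    (1 + ρ) • c - ρ • ((#J : ℝ)⁻¹ • ∑ j ∈ J, x j) = c - (ρ / #J) • ∑ j ∈ J, (x j - c) := by
  rw [sum_sub_distrib, sum_const, ← Nat.cast_smul_eq_nsmul ℝ, smul_sub, smul_smul, smul_smul,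
    div_mul_cancel₀ _ (by exact_mod_cast hJ.card_ne_zero)]
  module

end Module

theorem Nat.mul_add_one_mul_choose_pred (n k : ℕ) :
    n * (n + 1) * (n - 1).choose k = (k + 1) * (n - k) * (n + 1).choose (k + 1) := by
  cases n with
  | zero => simp
  | succ n =>
    simp only [Nat.add_sub_cancel]
    calc (n + 1) * (n + 1 + 1) * n.choose k = (n + 1 + 1) * (n.choose k * (n + 1)) := by ring
      _ = (n + 1 - k) * ((n + 1 + 1) * (n + 1).choose k) := by
          rw [Nat.choose_mul_succ_eq]; ring
      _ = (k + 1) * (n + 1 - k) * (n + 1 + 1).choose (k + 1) := by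
          rw [Nat.add_one_mul_choose_eq]; ring

theorem sq_sqrt_div_mul_choose (n k : ℕ) (hk : k < n) :
    (√(((k + 1 : ℕ) * n : ℝ) / ((n : ℝ) - (k + 1 : ℕ) + 1)) / (k + 1 : ℕ)) ^ 2
        * (n - 1).choose k = (n + 1).choose (k + 1) / (n + 1) := by
  have hchoose := congrArg (Nat.cast : ℕ → ℝ) (Nat.mul_add_one_mul_choose_pred n k)
  push_cast [Nat.cast_sub hk.le] at hchoose ⊢
  have hgap : (0 : ℝ) < n - (k + 1) + 1 := by
    have : (k : ℝ) < n := by exact_mod_cast hk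
    linarith
  rw [div_pow, Real.sq_sqrt (by positivity)]
  field_simp
  linear_combination hchoose

theorem simplex_in_ball_has_suitable_face_general
    (n : ℕ) (x : Fin (n + 1) → EuclideanSpace ℝ (Fin n))
    (hx : ∀ i, ‖x i‖ ≤ 1)
    (c : EuclideanSpace ℝ (Fin n))
    (hc : c = ((n : ℝ) + 1)⁻¹ • ∑ j, x j)
    (m : ℕ) (hm1 : 1 ≤ m) (hm2 : m ≤ n) :
    ∃ J : Finset (Fin (n + 1)), J.card = m ∧
      ‖(1 + Real.sqrt ((m * n : ℝ) / ((n : ℝ) - m + 1))) • c -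
        Real.sqrt ((m * n : ℝ) / ((n : ℝ) - m + 1)) • ((m : ℝ)⁻¹ • ∑ j ∈ J, x j)‖ ≤ 1 := by
  obtain ⟨k, rfl⟩ : ∃ k, m = k + 1 := ⟨m - 1, by omega⟩
  set ρ := Real.sqrt (((k + 1 : ℕ) * n : ℝ) / ((n : ℝ) - (k + 1 : ℕ) + 1))
  set P := (univ : Finset (Fin (n + 1))).powersetCard (k + 1)
  have hcard : #(univ : Finset (Fin (n + 1))) = n + 1 := by simp
  have hcentroid : ∑ j, (x j - c) = 0 := by
    simpa [hc, hcard] using sum_sub_smul_sum_eq_zero univ univ_nonempty x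
  have hparallel := sum_norm_add_sq_of_sum_eq_zero univ c (fun j => x j - c) hcentroid
  simp only [add_sub_cancel, hcard, Nat.cast_add_one] at hparallel
  have hsum : ∑ J ∈ P, ‖c - (ρ / (k + 1 : ℕ)) • ∑ j ∈ J, (x j - c)‖ ^ 2
      = (n + 1).choose (k + 1) / (n + 1) * ∑ j, ‖x j‖ ^ 2 := by
    rw [sum_powersetCard_norm_sub_smul_sum_sq _ _ _ hcentroid, hcard, Nat.add_sub_add_right,
      sq_sqrt_div_mul_choose n k hm2, hparallel]
    field_simp
  have hx_sq : ∑ j, ‖x j‖ ^ 2 ≤ n + 1 := by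
    simpa [hcard] using sum_le_card_nsmul univ _ 1 fun j _ => pow_le_one₀ (norm_nonneg _) (hx j)
  have hbound : ∑ J ∈ P, ‖c - (ρ / (k + 1 : ℕ)) • ∑ j ∈ J, (x j - c)‖ ^ 2 ≤ ∑ J ∈ P, 1 := by
    rw [hsum, sum_const, card_powersetCard, hcard, nsmul_one]
    calc _ ≤ ((n + 1).choose (k + 1) / (n + 1) : ℝ) * (n + 1) := by gcongr
      _ = (n + 1).choose (k + 1) := by field_simp
  obtain ⟨J, hJ, hJle⟩ := exists_le_of_sum_le (powersetCard_nonempty.2 (by rw [hcard]; omega)) hbound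
  obtain ⟨-, hJcard⟩ := mem_powersetCard.1 hJ
  have hJne : J.Nonempty := card_pos.1 (by omega)
  refine ⟨J, hJcard, ?_⟩
  rw [← hJcard, one_add_smul_sub_smul_inv_card_smul_sum J hJne, hJcard]
  exact (sq_le_one_iff₀ (norm_nonneg _)).1 hJle

/-- **Theorem 1.** If the vertices `x 0, …, x n` of a nondegenerate simplex in ℝⁿ all lie in the
closed unit ball, then for every `m` with `1 ≤ m ≤ n` there is a set `J` of `m` indices such that
the point `y_J = (1+ρ)·c − ρ·g_J` (with `c` the centroid of the simplex, `g_J` the centroid of the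
corresponding face, `ρ = √(mn/(n−m+1))`) lies in the unit ball. -/
theorem simplex_in_ball_has_suitable_face
    (n : ℕ) (hn : 1 ≤ n) (x : Fin (n + 1) → EuclideanSpace ℝ (Fin n))
    (hind : AffineIndependent ℝ x)
    (hx : ∀ i, ‖x i‖ ≤ 1)
    (c : EuclideanSpace ℝ (Fin n))
    (hc : c = ((n : ℝ) + 1)⁻¹ • ∑ j, x j)
    (m : ℕ) (hm1 : 1 ≤ m) (hm2 : m ≤ n) :
    ∃ J : Finset (Fin (n + 1)), J.card = m ∧
      ‖(1 + Real.sqrt ((m * n : ℝ) / ((n : ℝ) - m + 1))) • c -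
        Real.sqrt ((m * n : ℝ) / ((n : ℝ) - m + 1)) • ((m : ℝ)⁻¹ • ∑ j ∈ J, x j)‖ ≤ 1 :=
  simplex_in_ball_has_suitable_face_general n x hx c hc m hm1 hm2
end

section
/- Let n ≥ 1 and let x_1, …, x_{n+1} be points of ℝ^n all lying in the closed unit ball B_n, with centroid c = (1/(n+1))·Σ_{j=1}^{n+1} x_j. Then there exists an index j with ‖2c − x_j‖ ≤ 1; that is, some vertex of the simplex is suitable. -/
/-!
The inner products `⟪c, c - x j⟫` sum to zero, so one of them is nonpositive, and for that vertex
`‖2c - x j‖² = 4⟪c, c - x j⟫ + ‖x j‖² ≤ ‖x j‖² ≤ 1`.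
-/

open Finset

section Centroid

variable {E : Type*} [NormedAddCommGroup E] [InnerProductSpace ℝ E]

theorem norm_two_smul_sub_sq (c y : E) :
    ‖(2 : ℝ) • c - y‖ ^ 2 = 4 * inner ℝ c (c - y) + ‖y‖ ^ 2 := by
  rw [← real_inner_self_eq_norm_sq, ← real_inner_self_eq_norm_sq]
  simp only [inner_sub_left, inner_sub_right, real_inner_smul_left, real_inner_smul_right,
    real_inner_comm y c]
  ring

theorem norm_two_smul_sub_le_of_inner_nonpos {c y : E} {r : ℝ}
    (hcy : inner ℝ c (c - y) ≤ 0) (hy : ‖y‖ ≤ r) : ‖(2 : ℝ) • c - y‖ ≤ r := by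
  have hr : 0 ≤ r := (norm_nonneg y).trans hy
  rw [← sq_le_sq₀ (norm_nonneg _) hr, norm_two_smul_sub_sq]
  nlinarith [pow_le_pow_left₀ (norm_nonneg y) hy 2]

variable {ι : Type*} [Fintype ι] [Nonempty ι]

theorem sum_inner_centroid_sub_eq_zero {x : ι → E} {c : E}
    (hc : c = (Fintype.card ι : ℝ)⁻¹ • ∑ i, x i) :
    ∑ i, inner ℝ c (c - x i) = 0 := by
  have hsum : ∑ i, x i = (Fintype.card ι : ℝ) • c := by
    rw [hc, smul_smul, mul_inv_cancel₀ (by positivity), one_smul]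
  simp only [inner_sub_right, sum_sub_distrib, sum_const, card_univ, nsmul_eq_mul]
  rw [← inner_sum, hsum, real_inner_smul_right, sub_self]

theorem exists_inner_centroid_sub_nonpos {x : ι → E} {c : E}
    (hc : c = (Fintype.card ι : ℝ)⁻¹ • ∑ i, x i) :
    ∃ j, inner ℝ c (c - x j) ≤ 0 := by
  obtain ⟨j, -, hj⟩ := exists_le_of_sum_le (s := univ) (f := fun i ↦ inner ℝ c (c - x i))
    (g := fun _ ↦ (0 : ℝ)) univ_nonempty (by simp [sum_inner_centroid_sub_eq_zero hc])
  exact ⟨j, hj⟩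

end Centroid

theorem exists_suitable_vertex_general
    (n : ℕ) (x : Fin (n + 1) → EuclideanSpace ℝ (Fin n))
    (hx : ∀ i, ‖x i‖ ≤ 1)
    (c : EuclideanSpace ℝ (Fin n))
    (hc : c = ((n : ℝ) + 1)⁻¹ • ∑ j, x j) :
    ∃ j : Fin (n + 1), ‖(2 : ℝ) • c - x j‖ ≤ 1 := by
  have hc' : c = (Fintype.card (Fin (n + 1)) : ℝ)⁻¹ • ∑ j, x j := by
    simpa using hc
  obtain ⟨j, hj⟩ := exists_inner_centroid_sub_nonpos hc'
  exact ⟨j, norm_two_smul_sub_le_of_inner_nonpos hj (hx j)⟩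

/-- For any points `x 0, …, x n` of ℝⁿ lying in the closed unit ball, with centroid `c`, some
vertex is suitable: there is an index `j` with `‖2c − x j‖ ≤ 1`. -/
theorem exists_suitable_vertex
    (n : ℕ) (hn : 1 ≤ n) (x : Fin (n + 1) → EuclideanSpace ℝ (Fin n))
    (hx : ∀ i, ‖x i‖ ≤ 1)
    (c : EuclideanSpace ℝ (Fin n))
    (hc : c = ((n : ℝ) + 1)⁻¹ • ∑ j, x j) :
    ∃ j : Fin (n + 1), ‖(2 : ℝ) • c - x j‖ ≤ 1 :=
  exists_suitable_vertex_general n x hx c hc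
end

section
/- Let n ≥ 2 and let x_1, …, x_{n+1} ∈ ℝ^n satisfy ‖x_i‖ = 1 for all i, and let c = (1/(n+1))·Σ_{j=1}^{n+1} x_j. Fix an integer m with 1 ≤ m ≤ n−1 and set ρ' = √((m+1)n/(n−m)). Suppose Σ_{2 ≤ i < j ≤ n+1} ⟨x_i, x_j⟩ ≤ ((n−1)/2)·Σ_{j=2}^{n+1} ⟨x_1, x_j⟩. Then, summing over all subsets J' ⊆ {1,…,n+1} with 1 ∈ J' and |J'| = m+1, and writing g_{J'} = (1/(m+1))·Σ_{j∈J'} x_j and y_{J'} = (1+ρ')·c − ρ'·g_{J'}, one has Σ_{J'} ‖y_{J'}‖² ≤ C(n,m), where C(n,m) is the binomial coefficient n choose m. -/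
/-!
Write `J = {0} ∪ K`, where `K` is an `m`-subset of the other `n` vertices `v k = x (k + 1)`, and
let `s = ∑ v k`. Averaging over `K` is sampling without replacement: the mean of `∑_{k ∈ K} v k`
is `(m / n) s` and its total variance is `m (n - m) / (n² (n - 1)) * (n ∑ ‖v k‖² - ‖s‖²)`.
So the sum equals `C(n, m)` times `‖α x₀ + β s‖² + t² * variance`, with `t = ρ / (m + 1)`, which
depends only on `a = ⟪x₀, s⟫` and `q = ‖s‖²`. The choice of `ρ` makes this equal to
`1 + 2αβ / (n - 1) * ((n - 1) a + n - q)`, where `α ≤ 0 ≤ β`, and the hypothesis says exactly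
that `(n - 1) a + n - q ≥ 0`.
-/

open Finset RealInnerProductSpace

namespace Finset

theorem card_filter_powersetCard_subset_mul_descFactorial {α : Type*} [DecidableEq α]
    {s T : Finset α} (hT : T ⊆ s) (m : ℕ) :
    #{K ∈ powersetCard m s | T ⊆ K} * (#s).descFactorial #T =
      m.descFactorial #T * (#s).choose m := by
  rcases le_or_gt #T m with hTm | hmT
  · rw [card_filter_powersetCard_subset T s m hT hTm, Nat.descFactorial_eq_factorial_mul_choose,
      Nat.descFactorial_eq_factorial_mul_choose, mul_assoc, mul_comm (m.choose _),
      Nat.choose_mul hTm]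
    ring
  · rw [(Nat.descFactorial_eq_zero_iff_lt).2 hmT, zero_mul, mul_eq_zero, card_eq_zero]
    left
    refine filter_eq_empty_iff.2 fun K hK hTK => ?_
    have := card_le_card hTK
    rw [(mem_powersetCard.1 hK).2] at this
    omega

variable {ι : Type*} [Fintype ι] [DecidableEq ι]

theorem sum_sum_mem_eq_sum_card_smul {M : Type*} [AddCommMonoid M] (𝒜 : Finset (Finset ι))
    (f : ι → M) : ∑ K ∈ 𝒜, ∑ i ∈ K, f i = ∑ i, #{K ∈ 𝒜 | i ∈ K} • f i := by
  rw [sum_comm' (t' := univ) (s' := fun i => {K ∈ 𝒜 | i ∈ K}) (by simp)]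
  simp only [sum_const]

theorem sum_sum_mem_sum_mem_eq_sum_card_smul {M : Type*} [AddCommMonoid M]
    (𝒜 : Finset (Finset ι)) (g : ι → ι → M) :
    ∑ K ∈ 𝒜, ∑ i ∈ K, ∑ j ∈ K, g i j =
      ∑ i, ∑ j, #{K ∈ 𝒜 | i ∈ K ∧ j ∈ K} • g i j := by
  rw [sum_comm' (t' := univ) (s' := fun i => {K ∈ 𝒜 | i ∈ K}) (by simp)]
  simp only [sum_sum_mem_eq_sum_card_smul, filter_filter]

theorem card_mul_card_filter_mem_powersetCard (m : ℕ) (i : ι) :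
    Fintype.card ι * #{K ∈ powersetCard m univ | i ∈ K} = m * (Fintype.card ι).choose m := by
  simpa [mul_comm] using
    card_filter_powersetCard_subset_mul_descFactorial (subset_univ {i}) m

theorem card_mul_card_filter_pair_mem_powersetCard (m : ℕ) (i j : ι) :
    (Fintype.card ι * (Fintype.card ι - 1) : ℝ) *
        #{K ∈ powersetCard m univ | i ∈ K ∧ j ∈ K} =
      (Fintype.card ι).choose m *
        ((m : ℝ) * (m - 1) + if i = j then (m : ℝ) * (Fintype.card ι - m) else 0) := by
  obtain rfl | hij := eq_or_ne i j
  · have := congrArg (Nat.cast (R := ℝ)) (card_mul_card_filter_mem_powersetCard m i)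
    push_cast at this
    simp only [and_self, if_true]
    linear_combination (Fintype.card ι - 1 : ℝ) * this
  · have := card_filter_powersetCard_subset_mul_descFactorial (subset_univ {i, j}) m
    rw [card_pair hij, card_univ] at this
    have := congrArg (Nat.cast (R := ℝ)) this
    push_cast [Nat.cast_descFactorial_two, insert_subset_iff, singleton_subset_iff] at this
    simp only [hij, if_false, add_zero]
    linear_combination this

theorem card_nsmul_sum_powersetCard_sum {M : Type*} [AddCommMonoid M] (m : ℕ) (f : ι → M) :
    Fintype.card ι • ∑ K ∈ powersetCard m univ, ∑ i ∈ K, f i =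
      (m * (Fintype.card ι).choose m) • ∑ i, f i := by
  simp only [sum_sum_mem_eq_sum_card_smul, smul_sum, smul_smul,
    card_mul_card_filter_mem_powersetCard]

variable {E : Type*} [NormedAddCommGroup E] [InnerProductSpace ℝ E]

theorem card_mul_sum_powersetCard_norm_sum_sq (m : ℕ) (v : ι → E) :
    (Fintype.card ι * (Fintype.card ι - 1) : ℝ) *
        ∑ K ∈ powersetCard m univ, ‖∑ i ∈ K, v i‖ ^ 2 =
      (Fintype.card ι).choose m * ((m : ℝ) * (m - 1) * ‖∑ i, v i‖ ^ 2 +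
        (m : ℝ) * (Fintype.card ι - m) * ∑ i, ‖v i‖ ^ 2) := by
  simp only [← real_inner_self_eq_norm_sq, sum_inner, inner_sum]
  rw [sum_sum_mem_sum_mem_eq_sum_card_smul]
  simp only [mul_sum, nsmul_eq_mul, ← mul_assoc, card_mul_card_filter_pair_mem_powersetCard]
  simp only [mul_add, add_mul, sum_add_distrib, mul_ite, ite_mul, mul_zero, zero_mul, sum_ite_eq,
    mem_univ, if_true, ← mul_sum]
  ring

theorem sum_powersetCard_norm_sub_smul_sum_sq (hι : 1 < Fintype.card ι) (m : ℕ) (u : E)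
    (t : ℝ) (v : ι → E) :
    ∑ K ∈ powersetCard m univ, ‖u - t • ∑ i ∈ K, v i‖ ^ 2 =
      (Fintype.card ι).choose m * (‖u - (t * m / Fintype.card ι) • ∑ i, v i‖ ^ 2 +
        t ^ 2 * (m * (Fintype.card ι - m) / (Fintype.card ι ^ 2 * (Fintype.card ι - 1))) *
          (Fintype.card ι * ∑ i, ‖v i‖ ^ 2 - ‖∑ i, v i‖ ^ 2)) := by
  have hn : (Fintype.card ι : ℝ) ≠ 0 := by positivity
  have hn1 : (Fintype.card ι - 1 : ℝ) ≠ 0 := sub_ne_zero.2 (by exact_mod_cast hι.ne')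
  have hmean : ∑ K ∈ powersetCard m univ, ∑ i ∈ K, v i =
      ((m * (Fintype.card ι).choose m : ℝ) / Fintype.card ι) • ∑ i, v i := by
    have h := card_nsmul_sum_powersetCard_sum m v
    rw [← Nat.cast_smul_eq_nsmul ℝ, ← Nat.cast_smul_eq_nsmul ℝ, Nat.cast_mul] at h
    rw [div_eq_inv_mul, mul_smul, ← h, smul_smul, inv_mul_cancel₀ hn, one_smul]
  have hsq := card_mul_sum_powersetCard_norm_sum_sq m v
  simp only [norm_sub_sq_real, norm_smul, mul_pow, Real.norm_eq_abs, sq_abs, inner_smul_right,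
    sum_add_distrib, sum_sub_distrib, ← mul_sum, ← inner_sum, sum_const, card_powersetCard,
    card_univ, nsmul_eq_mul, hmean]
  field_simp
  linear_combination (Fintype.card ι : ℝ) * t ^ 2 * hsq

end Finset

theorem norm_sum_sq_eq_sum_norm_sq_add_two_mul_sum_lt {ι E : Type*} [Fintype ι]
    [LinearOrder ι] [NormedAddCommGroup E] [InnerProductSpace ℝ E] (v : ι → E) :
    ‖∑ i, v i‖ ^ 2 =
      ∑ i, ‖v i‖ ^ 2 + 2 * ∑ p ∈ univ.filter (fun p : ι × ι => p.1 < p.2), ⟪v p.1, v p.2⟫ := by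
  have hswap : ∑ p ∈ univ.filter (fun p : ι × ι => p.2 < p.1), ⟪v p.1, v p.2⟫ =
      ∑ p ∈ univ.filter (fun p : ι × ι => p.1 < p.2), ⟪v p.1, v p.2⟫ :=
    sum_equiv (Equiv.prodComm ι ι) (by simp) fun p _ => real_inner_comm _ _
  have htrichotomy : ∀ p : ι × ι, ⟪v p.1, v p.2⟫ =
      (if p.1 < p.2 then ⟪v p.1, v p.2⟫ else 0) + (if p.2 < p.1 then ⟪v p.1, v p.2⟫ else 0) +
        if p.1 = p.2 then ⟪v p.1, v p.2⟫ else 0 := by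
    intro p
    rcases lt_trichotomy p.1 p.2 with h | h | h
    · simp [h, h.not_gt, h.ne]
    · simp [h]
    · simp [h, h.not_gt, h.ne']
  rw [← real_inner_self_eq_norm_sq, sum_inner]
  simp only [inner_sum]
  rw [← Fintype.sum_prod_type' (fun i j => ⟪v i, v j⟫),
    sum_congr rfl fun p _ => htrichotomy p, sum_add_distrib, sum_add_distrib, ← sum_filter,
    ← sum_filter, hswap,
    Fintype.sum_prod_type' (fun i j => if i = j then ⟪v i, v j⟫ else 0)]
  simp only [sum_ite_eq, mem_univ, if_true, real_inner_self_eq_norm_sq]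
  ring

section Weights

/- `α` and `β` are the coefficients of `x₀` and `s` in the mean of the vectors `y_J`, and
`t = ρ / (m + 1)`. -/
variable {n m ρ t α β : ℝ}

theorem weight_relations (hm : 0 ≤ m) (hmn : m < n) (hρ : ρ ^ 2 * (n - m) = (m + 1) * n)
    (ht : t = ρ / (m + 1)) (hα : α = (1 + ρ) / (n + 1) - t)
    (hβ : β = (1 + ρ) / (n + 1) - t * m / n) :
    n ^ 2 * ((n - 1) * β ^ 2 + 2 * α * β) = t ^ 2 * m * (n - m) ∧
      (n - 1) * α ^ 2 + t ^ 2 * m * (n - m) = n - 1 + 2 * n * α * β := by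
  have hn : n ≠ 0 := by linarith
  have hn1 : n + 1 ≠ 0 := by linarith
  have hm1 : m + 1 ≠ 0 := by linarith
  have hnm : n - m ≠ 0 := by linarith
  have hρ' : ρ ^ 2 = (m + 1) * n / (n - m) := by rw [eq_div_iff hnm, hρ]
  subst ht hα hβ
  -- Both sides are quadratic in `ρ`; the multiplier of `hρ'` is the `ρ²`-coefficient of their
  -- difference, computed from the `ρ`-coefficients `1 / (n + 1) - 1 / (m + 1)` of `α` and
  -- `1 / (n + 1) - m / ((m + 1) * n)` of `β`.
  constructor
  · linear_combination (norm := skip)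
      (n ^ 2 * ((n - 1) * (1 / (n + 1) - m / ((m + 1) * n)) ^ 2 +
        2 * (1 / (n + 1) - 1 / (m + 1)) * (1 / (n + 1) - m / ((m + 1) * n))) -
          m * (n - m) / (m + 1) ^ 2) * hρ'
    field_simp
    ring
  · linear_combination (norm := skip)
      ((n - 1) * (1 / (n + 1) - 1 / (m + 1)) ^ 2 + m * (n - m) / (m + 1) ^ 2 -
        2 * n * (1 / (n + 1) - 1 / (m + 1)) * (1 / (n + 1) - m / ((m + 1) * n))) * hρ'
    field_simp
    ring

theorem mean_sq_add_variance_le_one {a q : ℝ} (hn : 1 < n) (hm : 0 ≤ m) (hmn : m + 1 ≤ n)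
    (hρ0 : 0 ≤ ρ) (hρ : ρ ^ 2 * (n - m) = (m + 1) * n)
    (ht : t = ρ / (m + 1)) (hα : α = (1 + ρ) / (n + 1) - t)
    (hβ : β = (1 + ρ) / (n + 1) - t * m / n) (hq : q - n ≤ (n - 1) * a) :
    α ^ 2 + 2 * α * β * a + β ^ 2 * q + t ^ 2 * (m * (n - m) / (n ^ 2 * (n - 1))) * (n * n - q)
      ≤ 1 := by
  obtain ⟨h₁, h₂⟩ := weight_relations hm (by linarith) hρ ht hα hβ
  have hσ : m + 1 ≤ ρ * (n - m) := by
    refine (pow_le_pow_iff_left₀ (by linarith) (by nlinarith) two_ne_zero).1 ?_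
    rw [mul_pow, sq (n - m), ← mul_assoc, hρ]
    have h1 : 0 ≤ n - m - 1 := by linarith
    nlinarith [mul_nonneg (mul_nonneg (by linarith : 0 ≤ m + 1) h1) (by linarith : 0 ≤ n)]
  have hα0 : α ≤ 0 := by
    rw [hα, ht, sub_nonpos, div_le_div_iff₀ (by linarith) (by linarith)]
    nlinarith
  have hβ0 : 0 ≤ β := by
    rw [hβ, ht, sub_nonneg, div_mul_eq_mul_div, div_div,
      div_le_div_iff₀ (by positivity) (by linarith)]
    nlinarith
  have hn1 : n - 1 ≠ 0 := by linarith
  have hn0 : n ≠ 0 := by linarith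
  have key : α ^ 2 + 2 * α * β * a + β ^ 2 * q +
      t ^ 2 * (m * (n - m) / (n ^ 2 * (n - 1))) * (n * n - q) =
        1 + 2 * α * β / (n - 1) * ((n - 1) * a + n - q) := by
    field_simp
    linear_combination n ^ 2 * h₂ + q * h₁
  rw [key]
  have : 2 * α * β / (n - 1) * ((n - 1) * a + n - q) ≤ 0 :=
    mul_nonpos_of_nonpos_of_nonneg
      (div_nonpos_of_nonpos_of_nonneg (by nlinarith) (by linarith)) (by linarith)
  linarith

end Weights

theorem sum_powersetCard_norm_sq_le_choose {ι E : Type*} [Fintype ι] [DecidableEq ι]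
    [NormedAddCommGroup E] [InnerProductSpace ℝ E] (hι : 1 < Fintype.card ι) {m : ℕ}
    (hm : m < Fintype.card ι) {ρ : ℝ} (hρ0 : 0 ≤ ρ)
    (hρ : ρ ^ 2 * (Fintype.card ι - m) = (m + 1) * Fintype.card ι) {e : E} (he : ‖e‖ = 1)
    {v : ι → E} (hv : ∀ i, ‖v i‖ = 1)
    (hkey : ‖∑ i, v i‖ ^ 2 - Fintype.card ι ≤ (Fintype.card ι - 1) * ⟪e, ∑ i, v i⟫) {c : E}
    (hc : c = ((Fintype.card ι : ℝ) + 1)⁻¹ • (e + ∑ i, v i)) :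
    ∑ K ∈ powersetCard m univ,
        ‖(1 + ρ) • c - ρ • (((m : ℝ) + 1)⁻¹ • (e + ∑ i ∈ K, v i))‖ ^ 2 ≤
      (Fintype.card ι).choose m := by
  set t := ρ / (m + 1)
  have hterm : ∀ K : Finset ι, (1 + ρ) • c - ρ • (((m : ℝ) + 1)⁻¹ • (e + ∑ i ∈ K, v i)) =
      ((1 + ρ) • c - t • e) - t • ∑ i ∈ K, v i := fun K => by
    simp only [t, div_eq_mul_inv]
    module
  have hmean : ((1 + ρ) • c - t • e) - (t * m / Fintype.card ι) • ∑ i, v i =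
      ((1 + ρ) / (Fintype.card ι + 1) - t) • e +
        ((1 + ρ) / (Fintype.card ι + 1) - t * m / Fintype.card ι) • ∑ i, v i := by
    rw [hc]
    simp only [div_eq_mul_inv]
    module
  simp only [hterm]
  rw [sum_powersetCard_norm_sub_smul_sum_sq hι, hmean]
  refine mul_le_of_le_one_right (Nat.cast_nonneg _) ?_
  simp only [hv, one_pow, sum_const, card_univ, nsmul_eq_mul, mul_one, norm_add_sq_real,
    norm_smul, mul_pow, Real.norm_eq_abs, sq_abs, he, real_inner_smul_left, real_inner_smul_right]
  refine (le_of_eq ?_).trans (mean_sq_add_variance_le_one (by exact_mod_cast hι)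
    (Nat.cast_nonneg m) (by exact_mod_cast hm) hρ0 hρ rfl rfl rfl hkey)
  ring

theorem Fin.sum_filter_ne_zero_eq_sum_succ {M : Type*} [AddCommMonoid M] {n : ℕ}
    (f : Fin (n + 1) → M) : ∑ j ∈ univ.filter (· ≠ 0), f j = ∑ k : Fin n, f k.succ := by
  rw [filter_ne', ← compl_singleton, ← Fin.image_succ_univ,
    sum_image fun _ _ _ _ h => Fin.succ_injective _ h]

theorem Fin.sum_filter_zero_mem_card_eq_sum_powersetCard {M : Type*} [AddCommMonoid M]
    {n : ℕ} (m : ℕ) (f : Finset (Fin (n + 1)) → M) :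
    ∑ J ∈ univ.powerset.filter (fun J : Finset (Fin (n + 1)) => 0 ∈ J ∧ #J = m + 1), f J =
      ∑ K ∈ powersetCard m (univ : Finset (Fin n)), f (insert 0 (K.map (Fin.succEmb n))) := by
  have hinv : ∀ J : Finset (Fin (n + 1)), 0 ∈ J →
      insert 0 ((univ.filter (fun k : Fin n => k.succ ∈ J)).map (Fin.succEmb n)) = J := by
    intro J hJ
    ext a
    cases a using Fin.cases <;> simp [hJ]
  have hcard : ∀ K : Finset (Fin n), #(insert 0 (K.map (Fin.succEmb n))) = #K + 1 := fun K => by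
    rw [card_insert_of_notMem (by simp [Fin.succ_ne_zero]), card_map]
  symm
  refine sum_nbij' (fun K => insert 0 (K.map (Fin.succEmb n)))
    (fun J => univ.filter (fun k : Fin n => k.succ ∈ J)) ?_ ?_ ?_ ?_ (fun _ _ => rfl)
  · intro K hK
    simp_all
  · intro J hJ
    rw [mem_filter] at hJ
    have := hcard (univ.filter (fun k : Fin n => k.succ ∈ J))
    rw [hinv J hJ.2.1, hJ.2.2] at this
    simpa using this.symm
  · intro K _
    ext k
    simp [Fin.succ_ne_zero]
  · intro J hJ
    exact hinv J (mem_filter.1 hJ).2.1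

theorem Fin.sum_filter_pos_lt_eq_sum_succ {M : Type*} [AddCommMonoid M] {n : ℕ}
    (f : Fin (n + 1) → Fin (n + 1) → M) :
    ∑ p ∈ univ.filter (fun p : Fin (n + 1) × Fin (n + 1) => 0 < p.1 ∧ p.1 < p.2), f p.1 p.2 =
      ∑ p ∈ univ.filter (fun p : Fin n × Fin n => p.1 < p.2), f p.1.succ p.2.succ := by
  have : univ.filter (fun p : Fin (n + 1) × Fin (n + 1) => 0 < p.1 ∧ p.1 < p.2) =
      (univ.filter (fun p : Fin n × Fin n => p.1 < p.2)).map
        ((Fin.succEmb n).prodMap (Fin.succEmb n)) := by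
    ext ⟨a, b⟩
    cases a using Fin.cases <;> cases b using Fin.cases <;> simp
  rw [this, sum_map]
  rfl

theorem sum_sq_norms_y_le_choose_general
    (n : ℕ) (hn : 2 ≤ n) (x : Fin (n + 1) → EuclideanSpace ℝ (Fin n))
    (hnorm : ∀ i, ‖x i‖ = 1)
    (c : EuclideanSpace ℝ (Fin n))
    (hc : c = ((n : ℝ) + 1)⁻¹ • ∑ j, x j)
    (m : ℕ) (hm2 : m ≤ n - 1)
    (hineq : ∑ p ∈ Finset.univ.filter
          (fun p : Fin (n + 1) × Fin (n + 1) => 0 < p.1 ∧ p.1 < p.2),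
          ⟪x p.1, x p.2⟫ ≤
        ((n : ℝ) - 1) / 2 * ∑ j ∈ Finset.univ.filter (fun j : Fin (n + 1) => j ≠ 0),
          ⟪x 0, x j⟫) :
    ∑ J ∈ Finset.univ.powerset.filter
        (fun J : Finset (Fin (n + 1)) => (0 : Fin (n + 1)) ∈ J ∧ J.card = m + 1),
      ‖(1 + Real.sqrt (((m : ℝ) + 1) * n / ((n : ℝ) - m))) • c -
        Real.sqrt (((m : ℝ) + 1) * n / ((n : ℝ) - m)) •
          (((m : ℝ) + 1)⁻¹ • ∑ j ∈ J, x j)‖ ^ 2 ≤ (n.choose m : ℝ) := by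
  have hmn : (m : ℝ) < n := by exact_mod_cast (by omega : m < n)
  have hρ : √((m + 1) * n / (n - m)) ^ 2 * (n - m) = (m + 1) * n := by
    rw [Real.sq_sqrt (by positivity), div_mul_cancel₀ _ (by linarith)]
  have hkey : ‖∑ k : Fin n, x k.succ‖ ^ 2 - n ≤ (n - 1) * ⟪x 0, ∑ k : Fin n, x k.succ⟫ := by
    rw [Fin.sum_filter_pos_lt_eq_sum_succ (fun i j => ⟪x i, x j⟫),
      Fin.sum_filter_ne_zero_eq_sum_succ] at hineq
    rw [norm_sum_sq_eq_sum_norm_sq_add_two_mul_sum_lt, inner_sum]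
    simp only [hnorm, one_pow, sum_const, card_univ, Fintype.card_fin, nsmul_eq_mul, mul_one]
    linarith
  rw [Fin.sum_univ_succ] at hc
  rw [Fin.sum_filter_zero_mem_card_eq_sum_powersetCard]
  have hJ : ∀ K : Finset (Fin n),
      ∑ j ∈ insert 0 (K.map (Fin.succEmb n)), x j = x 0 + ∑ k ∈ K, x k.succ := fun K => by
    rw [sum_insert (by simp [Fin.succ_ne_zero]), sum_map]
    rfl
  simp only [hJ]
  simpa using sum_powersetCard_norm_sq_le_choose (ι := Fin n) (by simp; omega)
    (by simp; omega) (Real.sqrt_nonneg _) (by simpa using hρ) (hnorm 0) (fun k => hnorm k.succ)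
    (by simpa using hkey) (by simpa using hc)

/-- Key averaging step in the proof of Theorem 2: for a simplex inscribed in the unit sphere with
suitable vertex `x 0` (expressed via inequality (3.1)), the sum of `‖y_{J'}‖²` over all sets `J'`
of `m + 1` indices containing `0` is at most `C(n, m)`. -/
theorem sum_sq_norms_y_le_choose
    (n : ℕ) (hn : 2 ≤ n) (x : Fin (n + 1) → EuclideanSpace ℝ (Fin n))
    (hnorm : ∀ i, ‖x i‖ = 1)
    (c : EuclideanSpace ℝ (Fin n))
    (hc : c = ((n : ℝ) + 1)⁻¹ • ∑ j, x j)
    (m : ℕ) (hm1 : 1 ≤ m) (hm2 : m ≤ n - 1)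
    (hineq : ∑ p ∈ Finset.univ.filter
          (fun p : Fin (n + 1) × Fin (n + 1) => 0 < p.1 ∧ p.1 < p.2),
          ⟪x p.1, x p.2⟫ ≤
        ((n : ℝ) - 1) / 2 * ∑ j ∈ Finset.univ.filter (fun j : Fin (n + 1) => j ≠ 0),
          ⟪x 0, x j⟫) :
    ∑ J ∈ Finset.univ.powerset.filter
        (fun J : Finset (Fin (n + 1)) => (0 : Fin (n + 1)) ∈ J ∧ J.card = m + 1),
      ‖(1 + Real.sqrt (((m : ℝ) + 1) * n / ((n : ℝ) - m))) • c -
        Real.sqrt (((m : ℝ) + 1) * n / ((n : ℝ) - m)) •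
          (((m : ℝ) + 1)⁻¹ • ∑ j ∈ J, x j)‖ ^ 2 ≤ (n.choose m : ℝ) :=
  sum_sq_norms_y_le_choose_general n hn x hnorm c hc m hm2 hineq
end
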